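/- Let 0 < α < 1 and L > 0. There exists a constant c₁ > 0, depending only on α and L (in particular independent of N), such that for every integer N ≥ 2, with mesh size h = L/N, and every nonzero grid function v one has (δ^α_{x,+} v, v) = (δ^α_{x,-} v, v) > c₁ · ln 2 · ‖v‖². -/

import Mathlib

open Finset

/-- The coefficients `g_k^{(γ)}`: `g_0 = 1`, `g_k = (1 - (γ+1)/k) g_{k-1}` for `k ≥ 1`. -/
noncomputable def gcoef (γ : ℝ) : ℕ → ℝ
  | 0 => 1
  | k + 1 => (1 - (γ + 1) / (k + 1)) * gcoef γ k

/-- The coefficients `ω_k^{(γ)}`: `ω_0 = (γ/2) g_0` and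
`ω_k = (γ/2) g_k + ((2-γ)/2) g_{k-1}` for `k ≥ 1`. -/
noncomputable def wcoef (γ : ℝ) : ℕ → ℝ
  | 0 => γ / 2 * gcoef γ 0
  | k + 1 => γ / 2 * gcoef γ (k + 1) + (2 - γ) / 2 * gcoef γ k

/-- Discrete inner product `(u,v) = h ∑_{i=1}^{N-1} u_i v_i`. -/
noncomputable def ip (N : ℕ) (h : ℝ) (u v : ℕ → ℝ) : ℝ :=
  h * ∑ i ∈ Finset.Icc 1 (N - 1), u i * v i

/-- Discrete `L₂`-norm `‖v‖ = √(v,v)`. -/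
noncomputable def gnorm (N : ℕ) (h : ℝ) (v : ℕ → ℝ) : ℝ :=
  Real.sqrt (ip N h v v)

/-- `(δ^γ_{x,+} v)_i = h^{-γ} ∑_{k=0}^{i+1} ω_k^{(γ)} v_{i-k+1}`. -/
noncomputable def dplus (γ : ℝ) (h : ℝ) (v : ℕ → ℝ) (i : ℕ) : ℝ :=
  h ^ (-γ) * ∑ k ∈ Finset.range (i + 2), wcoef γ k * v (i + 1 - k)

/-- `(δ^γ_{x,-} v)_i = h^{-γ} ∑_{k=0}^{N-i+1} ω_k^{(γ)} v_{i+k-1}`. -/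
noncomputable def dminus (γ : ℝ) (N : ℕ) (h : ℝ) (v : ℕ → ℝ) (i : ℕ) : ℝ :=
  h ^ (-γ) * ∑ k ∈ Finset.range (N - i + 2), wcoef γ k * v (i + k - 1)

/-!
On the interior nodes `(δ₊v, v) = h^{1-α} vᵀWv` with the Toeplitz matrix `Wᵢⱼ = ω_{i+1-j}`, while
`(δ₋v, v) = h^{1-α} vᵀWᵀv`; this gives the equality. The off-diagonal entries of `W + Wᵀ` are
`ω₀ + ω₂` and `ω_{k+2}`, all `≤ 0` for `0 ≤ α ≤ 1`, so `2 vᵀWv` is at least the smallest row sum of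
`W + Wᵀ` times `∑ vᵢ²`. Enlarging a row to the full window `|i - j| < N` only adds nonpositive
entries, so each row sum is at least `2 ∑_{k ≤ N} ω_k ≥ 2 P_N`, where `P_m = ∏_{k ≤ m} (1 - α/k)`
are the partial sums of the `g_k`. Bernoulli's inequality gives `P_N ≥ (1 - α) N^{-α}`, and
`h^{-α} N^{-α} = L^{-α}` removes the dependence on `N`.
-/

/-- With `S = A + Aᵀ`: `vᵀSv = ∑ᵢ (∑ⱼ Sᵢⱼ) vᵢ² - ½ ∑ᵢⱼ Sᵢⱼ (vᵢ - vⱼ)²`, and the last sum is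
`≤ 0`. -/
lemma mul_sum_sq_le_two_mul_sum_sum {ι : Type*} (s : Finset ι) (A : ι → ι → ℝ) (v : ι → ℝ)
    {r : ℝ} (hoff : ∀ i ∈ s, ∀ j ∈ s, i ≠ j → A i j + A j i ≤ 0)
    (hrow : ∀ i ∈ s, r ≤ ∑ j ∈ s, (A i j + A j i)) :
    r * ∑ i ∈ s, v i ^ 2 ≤ 2 * ∑ i ∈ s, ∑ j ∈ s, A i j * v j * v i := by
  have hdiag : r * ∑ i ∈ s, v i ^ 2 ≤ ∑ i ∈ s, ∑ j ∈ s, (A i j + A j i) * v i ^ 2 := by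
    rw [mul_sum]
    exact sum_le_sum fun i hi => by
      rw [← sum_mul]
      exact mul_le_mul_of_nonneg_right (hrow i hi) (sq_nonneg _)
  have hdiff : ∑ i ∈ s, ∑ j ∈ s, (A i j + A j i) * (v i - v j) ^ 2 ≤ 0 :=
    sum_nonpos fun i hi => sum_nonpos fun j hj => by
      rcases eq_or_ne i j with rfl | hij
      · simp
      · exact mul_nonpos_of_nonpos_of_nonneg (hoff i hi j hj hij) (sq_nonneg _)
  have hswap : ∑ i ∈ s, ∑ j ∈ s, (A i j + A j i) * v j ^ 2
      = ∑ i ∈ s, ∑ j ∈ s, (A i j + A j i) * v i ^ 2 := by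
    rw [sum_comm]
    exact sum_congr rfl fun i _ => sum_congr rfl fun j _ => by ring
  have hcross : ∑ i ∈ s, ∑ j ∈ s, A j i * v i * v j = ∑ i ∈ s, ∑ j ∈ s, A i j * v j * v i :=
    sum_comm
  have hexpand : ∑ i ∈ s, ∑ j ∈ s, (A i j + A j i) * (v i - v j) ^ 2
      = ∑ i ∈ s, ∑ j ∈ s, (A i j + A j i) * v i ^ 2
        + ∑ i ∈ s, ∑ j ∈ s, (A i j + A j i) * v j ^ 2
        - 2 * ∑ i ∈ s, ∑ j ∈ s, A i j * v j * v i
        - 2 * ∑ i ∈ s, ∑ j ∈ s, A j i * v i * v j := by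
    simp only [mul_sum, ← sum_add_distrib, ← sum_sub_distrib]
    exact sum_congr rfl fun i _ => sum_congr rfl fun j _ => by ring
  linarith

/-- Each distance `d ≥ 1` is `Nat.dist i j` for at most two `j`, and `f d ≤ 0` there. -/
lemma add_two_mul_sum_range_le_sum_dist {f : ℕ → ℝ} (hf : ∀ d, f (d + 1) ≤ 0) {n i : ℕ}
    (hi1 : 1 ≤ i) (hin : i ≤ n) :
    f 0 + 2 * ∑ d ∈ range n, f (d + 1) ≤ ∑ j ∈ Icc 1 n, f (Nat.dist i j) := by
  have hsplit : ∑ j ∈ Icc 1 n, f (Nat.dist i j)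
      = ∑ j ∈ Ico 1 i, f (Nat.dist i j) + (f 0 + ∑ j ∈ Ico (i + 1) (n + 1), f (Nat.dist i j)) := by
    rw [← Ico_add_one_right_eq_Icc, ← sum_Ico_consecutive _ hi1 (by omega : i ≤ n + 1),
      sum_eq_sum_Ico_succ_bot (by omega : i < n + 1), Nat.dist_self]
  have hleft : ∑ j ∈ Ico 1 i, f (Nat.dist i j) = ∑ d ∈ range (i - 1), f (d + 1) := by
    refine sum_nbij' (fun j => i - 1 - j) (fun d => i - 1 - d) ?_ ?_ ?_ ?_ ?_ <;>
      intro j hj <;> simp only [mem_Ico, mem_range] at hj ⊢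
    · omega
    · omega
    · omega
    · omega
    · rw [Nat.dist_eq_sub_of_le_right (by omega)]
      congr 1
      omega
  have hright : ∑ j ∈ Ico (i + 1) (n + 1), f (Nat.dist i j) = ∑ d ∈ range (n - i), f (d + 1) := by
    rw [sum_Ico_eq_sum_range, show n + 1 - (i + 1) = n - i by omega]
    refine sum_congr rfl fun d _ => ?_
    rw [Nat.dist_eq_sub_of_le (by omega)]
    congr 1
    omega
  have hmono : ∀ k ≤ n, ∑ d ∈ range n, f (d + 1) ≤ ∑ d ∈ range k, f (d + 1) := fun k hk =>
    sum_le_sum_of_subset_of_nonpos' (range_subset_range.2 hk) fun d _ _ => hf d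
  rw [hsplit, hleft, hright]
  linarith [hmono (i - 1) (by omega), hmono (n - i) (by omega)]

noncomputable def pcoef (α : ℝ) (m : ℕ) : ℝ := ∏ k ∈ Icc 1 m, (1 - α / k)

section Coefficients

variable {α : ℝ}

lemma pcoef_succ (α : ℝ) (m : ℕ) : pcoef α (m + 1) = pcoef α m * (1 - α / (m + 1)) := by
  rw [pcoef, pcoef, prod_Icc_succ_top (by omega), Nat.cast_succ]

lemma one_sub_div_nonneg (hα1 : α ≤ 1) {x : ℝ} (hx : 1 ≤ x) : 0 ≤ 1 - α / x := by
  rw [sub_nonneg, div_le_one (by linarith)]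
  linarith

lemma pcoef_nonneg (hα1 : α ≤ 1) (m : ℕ) : 0 ≤ pcoef α m :=
  prod_nonneg fun k hk => one_sub_div_nonneg hα1 (by exact_mod_cast (mem_Icc.1 hk).1)

lemma gcoef_succ_eq (α : ℝ) (m : ℕ) : gcoef α (m + 1) = -(α / (m + 1)) * pcoef α m := by
  induction m with
  | zero => simp [gcoef, pcoef]
  | succ m ih =>
    rw [gcoef, ih, pcoef_succ]
    push_cast
    field_simp
    ring

lemma sum_range_gcoef (α : ℝ) (m : ℕ) : ∑ k ∈ range (m + 1), gcoef α k = pcoef α m := by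
  induction m with
  | zero => simp [gcoef, pcoef]
  | succ m ih =>
    rw [sum_range_succ, ih, gcoef_succ_eq, pcoef_succ]
    ring

lemma gcoef_succ_nonpos (hα0 : 0 ≤ α) (hα1 : α ≤ 1) (m : ℕ) : gcoef α (m + 1) ≤ 0 := by
  rw [gcoef_succ_eq, neg_mul]
  exact neg_nonpos.2 (mul_nonneg (by positivity) (pcoef_nonneg hα1 m))

lemma pcoef_antitone (hα0 : 0 ≤ α) (hα1 : α ≤ 1) : Antitone (pcoef α) :=
  antitone_nat_of_succ_le fun m => by
    rw [← sum_range_gcoef, ← sum_range_gcoef, sum_range_succ _ (m + 1)]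
    linarith [gcoef_succ_nonpos hα0 hα1 m]

lemma mul_rpow_neg_le_pcoef (hα0 : 0 ≤ α) (hα1 : α ≤ 1) {m : ℕ} (hm : 1 ≤ m) :
    (1 - α) * (m : ℝ) ^ (-α) ≤ pcoef α m := by
  induction m, hm using Nat.le_induction with
  | base => simp [pcoef]
  | succ m hm ih =>
    have hM : (1 : ℝ) ≤ m := by exact_mod_cast hm
    have bernoulli : ((m : ℝ) / (m + 1)) ^ α ≤ 1 - α / (m + 1) := by
      have hs : -1 ≤ -1 / ((m : ℝ) + 1) := by
        rw [neg_div, neg_le_neg_iff, div_le_one (by linarith)]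
        linarith
      have h := rpow_one_add_le_one_add_mul_self hs hα0 hα1
      convert h using 2 <;> field_simp <;> ring
    have hsplit : ((m + 1 : ℕ) : ℝ) ^ (-α) = (m : ℝ) ^ (-α) * ((m : ℝ) / (m + 1)) ^ α := by
      rw [Real.div_rpow (by linarith) (by linarith), Real.rpow_neg (by linarith),
        Real.rpow_neg (by linarith), Nat.cast_succ]
      field_simp
    calc (1 - α) * ((m + 1 : ℕ) : ℝ) ^ (-α)
        = (1 - α) * (m : ℝ) ^ (-α) * ((m : ℝ) / (m + 1)) ^ α := by rw [hsplit]; ring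
      _ ≤ pcoef α m * (1 - α / (m + 1)) :=
        mul_le_mul ih bernoulli (by positivity) (pcoef_nonneg hα1 m)
      _ = pcoef α (m + 1) := (pcoef_succ α m).symm

lemma sum_range_wcoef (α : ℝ) (m : ℕ) :
    ∑ k ∈ range (m + 2), wcoef α k = α / 2 * pcoef α (m + 1) + (2 - α) / 2 * pcoef α m := by
  rw [← sum_range_gcoef, ← sum_range_gcoef, sum_range_succ', sum_range_succ' (gcoef α)]
  simp only [wcoef, mul_add, sum_add_distrib, ← mul_sum]
  ring

lemma pcoef_le_sum_range_wcoef (hα0 : 0 ≤ α) (hα1 : α ≤ 1) (m : ℕ) :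
    pcoef α (m + 1) ≤ ∑ k ∈ range (m + 2), wcoef α k := by
  rw [sum_range_wcoef]
  nlinarith [pcoef_antitone hα0 hα1 (Nat.le_succ m)]

lemma wcoef_add_two_nonpos (hα0 : 0 ≤ α) (hα1 : α ≤ 1) (k : ℕ) : wcoef α (k + 2) ≤ 0 := by
  simp only [wcoef]
  nlinarith [gcoef_succ_nonpos hα0 hα1 (k + 1), gcoef_succ_nonpos hα0 hα1 k]

lemma wcoef_zero_add_wcoef_two_nonpos (hα0 : 0 ≤ α) (hα1 : α ≤ 1) :
    wcoef α 0 + wcoef α 2 ≤ 0 := by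
  have h : wcoef α 0 + wcoef α 2 = α * (α + 2) * (α - 1) / 4 := by
    simp only [wcoef, gcoef]
    ring
  rw [h]
  nlinarith [mul_nonneg hα0 (by linarith : (0 : ℝ) ≤ α + 2)]

end Coefficients

/-- The Toeplitz matrix `Wᵢⱼ = ω_{i+1-j}` of `δ₊` on the interior nodes; `δ₋` acts by `Wᵀ`. -/
noncomputable def wmat (α : ℝ) (i j : ℕ) : ℝ :=
  if j ≤ i + 1 then wcoef α (i + 1 - j) else 0

noncomputable def wform (α : ℝ) (N : ℕ) (v : ℕ → ℝ) : ℝ :=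
  ∑ i ∈ Icc 1 (N - 1), ∑ j ∈ Icc 1 (N - 1), wmat α i j * v j * v i

section GridOperators

variable {α : ℝ} {N : ℕ} {v : ℕ → ℝ}

lemma sum_range_mul_eq_sum_Icc (f : ℕ → ℝ) (hv0 : v 0 = 0) (hvN : v N = 0) :
    ∑ j ∈ range (N + 1), f j * v j = ∑ j ∈ Icc 1 (N - 1), f j * v j := by
  symm
  refine sum_subset (fun j hj => ?_) fun j hj hj' => ?_
  · simp only [mem_Icc, mem_range] at hj ⊢
    omega
  · simp only [mem_Icc, mem_range] at hj hj'
    obtain rfl | rfl : j = 0 ∨ j = N := by omega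
    · simp [hv0]
    · simp [hvN]

lemma dplus_eq (h : ℝ) (hv0 : v 0 = 0) (hvN : v N = 0) {i : ℕ} (hi : i < N) :
    dplus α h v i = h ^ (-α) * ∑ j ∈ Icc 1 (N - 1), wmat α i j * v j := by
  rw [dplus, ← sum_range_mul_eq_sum_Icc _ hv0 hvN]
  congr 1
  calc ∑ k ∈ range (i + 2), wcoef α k * v (i + 1 - k)
      = ∑ j ∈ range (i + 2), wmat α i j * v j := by
        rw [← sum_range_reflect]
        refine sum_congr rfl fun j hj => ?_
        rw [mem_range] at hj
        rw [wmat, if_pos (by omega), show i + 2 - 1 - j = i + 1 - j by omega,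
          show i + 1 - (i + 1 - j) = j by omega]
    _ = ∑ j ∈ range (N + 1), wmat α i j * v j := by
        refine sum_subset (range_subset_range.2 (by omega)) fun j _ hj => ?_
        rw [mem_range] at hj
        rw [wmat, if_neg (by omega), zero_mul]

lemma dminus_eq (h : ℝ) (hv0 : v 0 = 0) (hvN : v N = 0) {i : ℕ} (hi1 : 1 ≤ i) (hi : i ≤ N) :
    dminus α N h v i = h ^ (-α) * ∑ j ∈ Icc 1 (N - 1), wmat α j i * v j := by
  rw [dminus, ← sum_range_mul_eq_sum_Icc _ hv0 hvN]
  congr 1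
  calc ∑ k ∈ range (N - i + 2), wcoef α k * v (i + k - 1)
      = ∑ j ∈ Ico (i - 1) (N + 1), wmat α j i * v j := by
        rw [sum_Ico_eq_sum_range, show N + 1 - (i - 1) = N - i + 2 by omega]
        refine sum_congr rfl fun k _ => ?_
        rw [wmat, if_pos (by omega), show i - 1 + k + 1 - i = k by omega,
          show i - 1 + k = i + k - 1 by omega]
    _ = ∑ j ∈ range (N + 1), wmat α j i * v j := by
        refine sum_subset (fun j hj => ?_) fun j hj hj' => ?_
        · simp only [mem_Ico, mem_range] at hj ⊢
          omega
        · simp only [mem_Ico, mem_range] at hj hj'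
          rw [wmat, if_neg (by omega), zero_mul]

lemma ip_dplus (h : ℝ) (hv0 : v 0 = 0) (hvN : v N = 0) :
    ip N h (dplus α h v) v = h * h ^ (-α) * wform α N v := by
  rw [ip, wform, mul_assoc, mul_sum _ _ (h ^ (-α))]
  refine congrArg (h * ·) (sum_congr rfl fun i hi => ?_)
  rw [dplus_eq h hv0 hvN (by simp only [mem_Icc] at hi; omega), mul_assoc, sum_mul]

lemma ip_dminus (h : ℝ) (hv0 : v 0 = 0) (hvN : v N = 0) :
    ip N h (dminus α N h v) v = h * h ^ (-α) * wform α N v := by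
  rw [ip, wform, sum_comm, mul_assoc, mul_sum _ _ (h ^ (-α))]
  refine congrArg (h * ·) (sum_congr rfl fun i hi => ?_)
  simp only [mem_Icc] at hi
  rw [dminus_eq h hv0 hvN hi.1 (by omega), mul_assoc, sum_mul]
  exact congrArg (h ^ (-α) * ·) (sum_congr rfl fun j _ => by ring)

end GridOperators

section Toeplitz

variable {α : ℝ}

lemma wmat_add_wmat_eq_dist (α : ℝ) (i j : ℕ) :
    wmat α i j + wmat α j i = wmat α (Nat.dist i j) 0 + wmat α 0 (Nat.dist i j) := by
  wlog hji : j ≤ i generalizing i j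
  · rw [add_comm, Nat.dist_comm]
    exact this j i (by omega)
  rw [Nat.dist_eq_sub_of_le_right hji]
  simp only [wmat]
  split_ifs <;> first | omega | (congr 2 <;> omega)

lemma wmat_dist_succ_nonpos (hα0 : 0 ≤ α) (hα1 : α ≤ 1) (d : ℕ) :
    wmat α (d + 1) 0 + wmat α 0 (d + 1) ≤ 0 := by
  rcases d with _ | d
  · simpa [wmat, add_comm] using wcoef_zero_add_wcoef_two_nonpos hα0 hα1
  · simpa [wmat] using wcoef_add_two_nonpos hα0 hα1 (d + 1)

lemma wmat_window_sum (α : ℝ) {n : ℕ} (hn : 1 ≤ n) :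
    (wmat α 0 0 + wmat α 0 0) + 2 * ∑ d ∈ range n, (wmat α (d + 1) 0 + wmat α 0 (d + 1))
      = 2 * ∑ k ∈ range (n + 2), wcoef α k := by
  obtain ⟨m, rfl⟩ : ∃ m, n = m + 1 := ⟨n - 1, by omega⟩
  have hdiag : wmat α 0 0 = wcoef α 1 := by simp [wmat]
  have hrow : ∑ d ∈ range (m + 1), wmat α (d + 1) 0 = ∑ d ∈ range (m + 1), wcoef α (d + 2) :=
    sum_congr rfl fun d _ => by simp [wmat]
  have hcol : ∑ d ∈ range (m + 1), wmat α 0 (d + 1) = wcoef α 0 := by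
    rw [sum_range_succ']
    simp [wmat]
  have hsplit : ∑ k ∈ range (m + 1 + 2), wcoef α k
      = ∑ d ∈ range (m + 1), wcoef α (d + 2) + wcoef α 1 + wcoef α 0 := by
    rw [sum_range_succ', sum_range_succ']
  rw [sum_add_distrib, hdiag, hrow, hcol, hsplit]
  ring

end Toeplitz

lemma pcoef_mul_sum_sq_le_wform {α : ℝ} (hα0 : 0 ≤ α) (hα1 : α ≤ 1) {N : ℕ} (hN : 2 ≤ N)
    (v : ℕ → ℝ) : pcoef α N * ∑ i ∈ Icc 1 (N - 1), v i ^ 2 ≤ wform α N v := by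
  have key := mul_sum_sq_le_two_mul_sum_sum (Icc 1 (N - 1)) (wmat α) v (r := 2 * pcoef α N)
    (fun i _ j _ hij => by
      obtain ⟨d, hd⟩ := Nat.exists_eq_add_one.2 (Nat.dist_pos_of_ne hij)
      rw [wmat_add_wmat_eq_dist, hd]
      exact wmat_dist_succ_nonpos hα0 hα1 d)
    (fun i hi => by
      simp only [mem_Icc] at hi
      obtain ⟨m, rfl⟩ : ∃ m, N = m + 2 := ⟨N - 2, by omega⟩
      rw [show m + 2 - 1 = m + 1 by omega] at hi ⊢
      rw [sum_congr rfl fun j _ => wmat_add_wmat_eq_dist α i j]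
      calc 2 * pcoef α (m + 2) ≤ 2 * ∑ k ∈ range (m + 1 + 2), wcoef α k := by
            linarith [pcoef_le_sum_range_wcoef hα0 hα1 (m + 1)]
        _ = _ := (wmat_window_sum α (by omega)).symm
        _ ≤ _ := add_two_mul_sum_range_le_sum_dist (f := fun d => wmat α d 0 + wmat α 0 d)
              (wmat_dist_succ_nonpos hα0 hα1) hi.1 hi.2)
  rw [wform]
  linarith

lemma sum_Icc_sq_pos {N : ℕ} {v : ℕ → ℝ} (hv0 : v 0 = 0) (hvN : v N = 0)
    (hv : ∃ i ≤ N, v i ≠ 0) : 0 < ∑ i ∈ Icc 1 (N - 1), v i ^ 2 := by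
  obtain ⟨i, hiN, hi⟩ := hv
  have hi0 : i ≠ 0 := by rintro rfl; exact hi hv0
  have hiN' : i ≠ N := by rintro rfl; exact hi hvN
  exact sum_pos' (fun j _ => sq_nonneg _) ⟨i, mem_Icc.2 ⟨by omega, by omega⟩, by positivity⟩

theorem stmt12 (α L : ℝ) (hα0 : 0 < α) (hα1 : α < 1) (hL : 0 < L) :
    ∃ c₁ : ℝ, 0 < c₁ ∧ ∀ N : ℕ, 2 ≤ N → ∀ v : ℕ → ℝ,
      v 0 = 0 → v N = 0 → (∃ i ≤ N, v i ≠ 0) →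
      ip N (L / N) (dplus α (L / N) v) v = ip N (L / N) (dminus α N (L / N) v) v ∧
      c₁ * Real.log 2 * (gnorm N (L / N) v) ^ 2 < ip N (L / N) (dplus α (L / N) v) v := by
  have hα : 0 < 1 - α := sub_pos.2 hα1
  refine ⟨(1 - α) / (2 * L ^ α * Real.log 2), div_pos hα (by positivity), ?_⟩
  intro N hN v hv0 hvN hv
  have hNpos : (0 : ℝ) < N := Nat.cast_pos.2 (by omega)
  set h := L / N
  have hh : 0 < h := div_pos hL hNpos
  rw [ip_dplus h hv0 hvN, ip_dminus h hv0 hvN]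
  refine ⟨rfl, ?_⟩
  set E := ∑ i ∈ Icc 1 (N - 1), v i ^ 2
  have hE : 0 < E := sum_Icc_sq_pos hv0 hvN hv
  have hnorm : gnorm N h v ^ 2 = h * E := by
    rw [gnorm, ip, Real.sq_sqrt (mul_nonneg hh.le (sum_nonneg fun i _ => mul_self_nonneg _))]
    simp only [E, sq]
  have hscale : h ^ (-α) * (N : ℝ) ^ (-α) = L ^ (-α) := by
    rw [← Real.mul_rpow hh.le hNpos.le, div_mul_cancel₀ L hNpos.ne']
  have hform : (1 - α) * (N : ℝ) ^ (-α) * E ≤ wform α N v :=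
    (mul_le_mul_of_nonneg_right (mul_rpow_neg_le_pcoef hα0.le hα1.le (by omega)) hE.le).trans
      (pcoef_mul_sum_sq_le_wform hα0.le hα1.le hN v)
  calc (1 - α) / (2 * L ^ α * Real.log 2) * Real.log 2 * gnorm N h v ^ 2
      = h * ((1 - α) * L ^ (-α) * E) / 2 := by
        rw [hnorm, Real.rpow_neg hL.le]
        field_simp
    _ < h * ((1 - α) * L ^ (-α) * E) := half_lt_self (by positivity)
    _ = h * h ^ (-α) * ((1 - α) * (N : ℝ) ^ (-α) * E) := by rw [← hscale]; ring
    _ ≤ h * h ^ (-α) * wform α N v := mul_le_mul_of_nonneg_left hform (by positivity)
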